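/- arXiv:1504.01614 — 3 statements merged into one kernel-verified Lean document; each statement's English description precedes it below -/
import Mathlib

section
/- If random variables U, V, X, Y satisfy the Markov chain U - V - X - Y (i.e., the joint distribution factors as P(u,v,x,y) = P(x) P(v|x) P(u|v) P(y|x)), then I(V;Y) ≥ I(V;Y|U). -/
open Finset Real

noncomputable def prob {Ω α : Type*} [Fintype Ω] [DecidableEq α]
    (w : Ω → ℝ) (X : Ω → α) (a : α) : ℝ := ∑ ω, if X ω = a then w ω else 0

noncomputable def ent {Ω α : Type*} [Fintype Ω] [Fintype α] [DecidableEq α]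
    (w : Ω → ℝ) (X : Ω → α) : ℝ := -∑ a, prob w X a * Real.logb 2 (prob w X a)

noncomputable def condEnt {Ω α β : Type*} [Fintype Ω] [Fintype α] [DecidableEq α]
    [Fintype β] [DecidableEq β] (w : Ω → ℝ) (X : Ω → α) (Y : Ω → β) : ℝ :=
  ent w (fun ω => (X ω, Y ω)) - ent w Y

noncomputable def mi {Ω α β : Type*} [Fintype Ω] [Fintype α] [DecidableEq α]
    [Fintype β] [DecidableEq β] (w : Ω → ℝ) (X : Ω → α) (Y : Ω → β) : ℝ :=
  ent w X + ent w Y - ent w (fun ω => (X ω, Y ω))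

noncomputable def cmi {Ω α β γ : Type*} [Fintype Ω] [Fintype α] [DecidableEq α]
    [Fintype β] [DecidableEq β] [Fintype γ] [DecidableEq γ]
    (w : Ω → ℝ) (X : Ω → α) (Y : Ω → β) (Z : Ω → γ) : ℝ :=
  condEnt w X Z - condEnt w X (fun ω => (Y ω, Z ω))

def IsPMF {Ω : Type*} [Fintype Ω] (w : Ω → ℝ) : Prop :=
  (∀ ω, 0 ≤ w ω) ∧ ∑ ω, w ω = 1

/-- `A` and `C` are conditionally independent given `B`. -/
def CondIndep {Ω α β γ : Type*} [Fintype Ω] [DecidableEq α] [DecidableEq β] [DecidableEq γ]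
    (w : Ω → ℝ) (A : Ω → α) (B : Ω → β) (C : Ω → γ) : Prop :=
  ∀ a b c, prob w (fun ω => (A ω, B ω, C ω)) (a, b, c) * prob w B b =
    prob w (fun ω => (A ω, B ω)) (a, b) * prob w (fun ω => (B ω, C ω)) (b, c)

/-- Binary entropy function (base 2). -/
noncomputable def binEnt (x : ℝ) : ℝ := -(x * Real.logb 2 x) - (1 - x) * Real.logb 2 (1 - x)

/-! `I(V;Y) - I(V;Y|U)` is the interaction information of `V`, `U`, `Y`, which is symmetric in
`V` and `U`; hence it equals `I(U;Y) - I(U;Y|V)`. The chain `U - V - (X,Y)` implies `U - V - Y`,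
so `I(U;Y|V) = 0`, while `I(U;Y) ≥ 0` by Gibbs' inequality. -/

section Prob

variable {Ω α β : Type*} [Fintype Ω] {w : Ω → ℝ}

lemma sum_prob_mul [Fintype α] [DecidableEq α] (w : Ω → ℝ) (Z : Ω → α) (f : α → ℝ) :
    ∑ a, prob w Z a * f a = ∑ ω, w ω * f (Z ω) := by
  simp only [prob, sum_mul, ite_mul, zero_mul]
  rw [sum_comm]
  simp

lemma sum_prob [Fintype α] [DecidableEq α] (w : Ω → ℝ) (Z : Ω → α) :
    ∑ a, prob w Z a = ∑ ω, w ω := by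
  simpa using sum_prob_mul w Z fun _ => 1

lemma prob_congr [DecidableEq α] [DecidableEq β] {Z : Ω → α} {T : Ω → β} {a : α} {b : β}
    (h : ∀ ω, Z ω = a ↔ T ω = b) : prob w Z a = prob w T b :=
  sum_congr rfl fun ω _ => if_congr (h ω) rfl rfl

lemma prob_nonneg [DecidableEq α] (hw : ∀ ω, 0 ≤ w ω) (Z : Ω → α) (a : α) :
    0 ≤ prob w Z a :=
  sum_nonneg fun ω _ => by split_ifs <;> simp [hw ω]

lemma prob_le_prob_comp [DecidableEq α] [DecidableEq β] (hw : ∀ ω, 0 ≤ w ω)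
    (Z : Ω → α) (f : α → β) (a : α) : prob w Z a ≤ prob w (f ∘ Z) (f a) :=
  sum_le_sum fun ω _ => by split_ifs <;> simp_all

lemma prob_apply_pos [DecidableEq α] (hw : ∀ ω, 0 ≤ w ω) (Z : Ω → α) {ω : Ω} (hω : 0 < w ω) :
    0 < prob w Z (Z ω) := by
  calc 0 < w ω := hω
    _ = if Z ω = Z ω then w ω else 0 := (if_pos rfl).symm
    _ ≤ prob w Z (Z ω) := single_le_sum (f := fun ω' => if Z ω' = Z ω then w ω' else 0)
      (fun ω' _ => by split_ifs <;> simp [hw ω']) (mem_univ ω)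

lemma sum_prob_eq_prob_of_iff {γ : Type*} [Fintype γ] [DecidableEq γ] [DecidableEq α]
    [DecidableEq β] {Z : Ω → α} {X : Ω → γ} {T : Ω → β} {f : γ → α} {b : β}
    (h : ∀ ω c, Z ω = f c ↔ X ω = c ∧ T ω = b) : ∑ c, prob w Z (f c) = prob w T b := by
  simp only [prob]
  rw [sum_comm]
  refine sum_congr rfl fun ω _ => ?_
  simp only [h, ite_and, sum_ite_eq, mem_univ, if_true]

lemma CondIndep.snd {γ χ : Type*} [DecidableEq α] [DecidableEq β] [DecidableEq γ] [Fintype χ]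
    [DecidableEq χ] {A : Ω → α} {B : Ω → β} {X : Ω → χ} {Y : Ω → γ} (h : CondIndep w A B fun ω => (X ω, Y ω)) : CondIndep w A B Y := by
  intro a b y
  have marg_ABXY : ∑ x, prob w (fun ω => (A ω, B ω, X ω, Y ω)) (a, b, x, y)
      = prob w (fun ω => (A ω, B ω, Y ω)) (a, b, y) :=
    sum_prob_eq_prob_of_iff (f := fun x => (a, b, x, y)) fun _ _ => by
      simp only [Prod.ext_iff]; tauto
  have marg_BXY : ∑ x, prob w (fun ω => (B ω, X ω, Y ω)) (b, x, y)
      = prob w (fun ω => (B ω, Y ω)) (b, y) :=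
    sum_prob_eq_prob_of_iff (f := fun x => (b, x, y)) fun _ _ => by
      simp only [Prod.ext_iff]; tauto
  rw [← marg_ABXY, ← marg_BXY, sum_mul, mul_sum]
  exact sum_congr rfl fun x _ => h a b (x, y)

end Prob

section Entropy

variable {Ω α β γ δ : Type*} [Fintype Ω] [Fintype α] [DecidableEq α] [Fintype β] [DecidableEq β]
  {w : Ω → ℝ}

lemma ent_eq_neg_sum (w : Ω → ℝ) (Z : Ω → α) :
    ent w Z = -∑ ω, w ω * logb 2 (prob w Z (Z ω)) := by
  rw [ent, sum_prob_mul]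

lemma ent_congr {Z : Ω → α} {T : Ω → β} (h : ∀ ω ω', Z ω = Z ω' ↔ T ω = T ω') :
    ent w Z = ent w T := by
  simp only [ent_eq_neg_sum, prob_congr (h · _)]

lemma ent_prod_comm (A : Ω → α) (B : Ω → β) :
    ent w (fun ω => (A ω, B ω)) = ent w (fun ω => (B ω, A ω)) :=
  ent_congr fun _ _ => by simp only [Prod.ext_iff]; tauto

lemma ent_add_ent_eq_of_prob_mul_eq [Fintype γ] [DecidableEq γ] [Fintype δ] [DecidableEq δ]
    (hw : ∀ ω, 0 ≤ w ω) {Z₁ : Ω → α} {Z₂ : Ω → β} {T₁ : Ω → γ} {T₂ : Ω → δ}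
    (h : ∀ ω, prob w Z₁ (Z₁ ω) * prob w Z₂ (Z₂ ω) = prob w T₁ (T₁ ω) * prob w T₂ (T₂ ω)) :
    ent w Z₁ + ent w Z₂ = ent w T₁ + ent w T₂ := by
  simp only [ent_eq_neg_sum, ← neg_add, ← sum_add_distrib, ← mul_add]
  refine congrArg _ (sum_congr rfl fun ω _ => ?_)
  rcases (hw ω).eq_or_lt with h0 | hpos
  · simp [← h0]
  · rw [← logb_mul (prob_apply_pos hw Z₁ hpos).ne' (prob_apply_pos hw Z₂ hpos).ne',
      ← logb_mul (prob_apply_pos hw T₁ hpos).ne' (prob_apply_pos hw T₂ hpos).ne', h ω]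

end Entropy

lemma sub_mul_div_log_two_le {p q r : ℝ} (hp : 0 ≤ p) (hpq : p ≤ q) (hpr : p ≤ r) :
    (p - q * r) / log 2 ≤ p * (logb 2 p - logb 2 q - logb 2 r) := by
  rcases hp.eq_or_lt with rfl | hp
  · have : 0 ≤ q * r := mul_nonneg hpq hpr
    simp only [zero_sub, zero_mul, neg_div]
    exact neg_nonpos.mpr (by positivity)
  · have hq := hp.trans_le hpq
    have hr := hp.trans_le hpr
    have gibbs := one_sub_inv_le_log_of_pos (show 0 < p / (q * r) by positivity)
    rw [log_div hp.ne' (by positivity), log_mul hq.ne' hr.ne'] at gibbs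
    simp only [logb, ← sub_div, ← mul_div_assoc]
    gcongr
    calc p - q * r = p * (1 - (p / (q * r))⁻¹) := by field_simp
      _ ≤ p * (log p - (log q + log r)) := by gcongr
      _ = p * (log p - log q - log r) := by ring

section MutualInformation

variable {Ω α β γ : Type*} [Fintype Ω] [Fintype α] [DecidableEq α] [Fintype β] [DecidableEq β]
  [Fintype γ] [DecidableEq γ] {w : Ω → ℝ}

lemma mi_eq_sum (w : Ω → ℝ) (A : Ω → α) (B : Ω → β) :
    mi w A B = ∑ c : α × β, prob w (fun ω => (A ω, B ω)) c *
      (logb 2 (prob w (fun ω => (A ω, B ω)) c) - logb 2 (prob w A c.1)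
        - logb 2 (prob w B c.2)) := by
  rw [sum_prob_mul]
  simp only [mi, ent_eq_neg_sum, mul_sub, sum_sub_distrib]
  ring

lemma mi_nonneg (hw : IsPMF w) (A : Ω → α) (B : Ω → β) : 0 ≤ mi w A B := by
  have mass_zero : ∑ c : α × β,
      (prob w (fun ω => (A ω, B ω)) c - prob w A c.1 * prob w B c.2) / log 2 = 0 := by
    rw [← sum_div, sum_sub_distrib, sum_prob, Fintype.sum_prod_type, ← sum_mul_sum, sum_prob,
      sum_prob, hw.2]
    simp
  rw [mi_eq_sum, ← mass_zero]
  exact sum_le_sum fun c _ => sub_mul_div_log_two_le (prob_nonneg hw.1 _ c)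
    (prob_le_prob_comp hw.1 _ Prod.fst c) (prob_le_prob_comp hw.1 _ Prod.snd c)

lemma mi_sub_cmi_comm (A : Ω → α) (B : Ω → β) (C : Ω → γ) :
    mi w A C - cmi w A C B = mi w B C - cmi w B C A := by
  have hABC : ent w (fun ω => (A ω, C ω, B ω)) = ent w (fun ω => (B ω, C ω, A ω)) :=
    ent_congr fun _ _ => by simp only [Prod.ext_iff]; tauto
  simp only [mi, cmi, condEnt]
  rw [hABC, ent_prod_comm A B, ent_prod_comm A C, ent_prod_comm C B]
  ring

lemma cmi_eq_zero_of_condIndep (hw : ∀ ω, 0 ≤ w ω) {A : Ω → α} {B : Ω → β} {C : Ω → γ}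
    (h : CondIndep w A B C) : cmi w A C B = 0 := by
  have factorization : ent w (fun ω => (A ω, C ω, B ω)) + ent w B
      = ent w (fun ω => (A ω, B ω)) + ent w (fun ω => (C ω, B ω)) :=
    ent_add_ent_eq_of_prob_mul_eq hw fun ω => by
      rw [prob_congr (T := fun ω => (A ω, B ω, C ω)) (b := (A ω, B ω, C ω))
          fun _ => by simp only [Prod.ext_iff]; tauto,
        prob_congr (Z := fun ω => (C ω, B ω)) (T := fun ω => (B ω, C ω)) (b := (B ω, C ω))
          fun _ => by simp only [Prod.ext_iff]; tauto]
      exact h _ _ _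
  simp only [cmi, condEnt]
  linarith

end MutualInformation

theorem mi_ge_cmi_of_markov_general {Ω 𝒰 𝒱 𝒳 𝒴 : Type*} [Fintype Ω]
    [Fintype 𝒰] [DecidableEq 𝒰] [Fintype 𝒱] [DecidableEq 𝒱]
    [Fintype 𝒳] [DecidableEq 𝒳] [Fintype 𝒴] [DecidableEq 𝒴]
    (w : Ω → ℝ) (hw : IsPMF w)
    (U : Ω → 𝒰) (V : Ω → 𝒱) (X : Ω → 𝒳) (Y : Ω → 𝒴)
    (hUV : CondIndep w U V (fun ω => (X ω, Y ω))) :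
    mi w V Y ≥ cmi w V Y U := by
  have interaction := mi_sub_cmi_comm (w := w) V U Y
  have markov := cmi_eq_zero_of_condIndep hw.1 hUV.snd
  have gibbs := mi_nonneg hw U Y
  linarith

/-- under the Markov chain U - V - X - Y, `I(V;Y) ≥ I(V;Y|U)`. -/
theorem mi_ge_cmi_of_markov {Ω 𝒰 𝒱 𝒳 𝒴 : Type*} [Fintype Ω]
    [Fintype 𝒰] [DecidableEq 𝒰] [Fintype 𝒱] [DecidableEq 𝒱]
    [Fintype 𝒳] [DecidableEq 𝒳] [Fintype 𝒴] [DecidableEq 𝒴]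
    (w : Ω → ℝ) (hw : IsPMF w)
    (U : Ω → 𝒰) (V : Ω → 𝒱) (X : Ω → 𝒳) (Y : Ω → 𝒴)
    (hUV : CondIndep w U V (fun ω => (X ω, Y ω)))
    (hXY : CondIndep w (fun ω => (U ω, V ω)) X Y) :
    mi w V Y ≥ cmi w V Y U :=
  mi_ge_cmi_of_markov_general w hw U V X Y hUV
end

section
/- Let X ~ Bernoulli(1/2), Y an erasure of X with erasure probability p, Z an erasure of Y with erasure probability q, and V the output of a BSC(α) with input X, with V - X - Y - Z a Markov chain. Then I(Y;V|Z) = q(1-p)(1 - h(α)). -/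
open Finset Real

section helpers
variable {Ω σ τ : Type*} [Fintype Ω] [DecidableEq σ] [DecidableEq τ]

lemma prob_nonneg_s6 (w : Ω → ℝ) (hw : ∀ ω, 0 ≤ w ω) (S : Ω → σ) (s : σ) :
    0 ≤ prob w S s := by
  refine Finset.sum_nonneg fun ω _ => ?_
  split_ifs <;> simp [hw ω]

lemma prob_mono (w : Ω → ℝ) (hw : ∀ ω, 0 ≤ w ω) (S : Ω → σ) (T : Ω → τ) (s : σ) (t : τ)
    (h : ∀ ω, S ω = s → T ω = t) : prob w S s ≤ prob w T t := by
  refine Finset.sum_le_sum fun ω _ => ?_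
  by_cases hS : S ω = s
  · simp [hS, h ω hS]
  · simp only [hS, if_false]
    split_ifs <;> simp [hw ω]

lemma prob_congr_s6 (w : Ω → ℝ) (S : Ω → σ) (T : Ω → τ) (s : σ) (t : τ)
    (h : ∀ ω, S ω = s ↔ T ω = t) : prob w S s = prob w T t := by
  refine Finset.sum_congr rfl fun ω _ => ?_
  simp only [h ω]

lemma prob_fiber [Fintype τ] (w : Ω → ℝ) (S : Ω → σ) (T : Ω → τ) (s : σ) :
    prob w S s = ∑ t, prob w (fun ω => (S ω, T ω)) (s, t) := by
  unfold prob
  rw [Finset.sum_comm]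
  refine Finset.sum_congr rfl fun ω _ => ?_
  simp only [Prod.mk.injEq, ite_and]
  by_cases hS : S ω = s
  · simp [hS, Finset.sum_ite_eq]
  · simp [hS]

lemma prob_fiber' [Fintype σ] (w : Ω → ℝ) (S : Ω → σ) (T : Ω → τ) (t : τ) :
    prob w T t = ∑ s, prob w (fun ω => (S ω, T ω)) (s, t) := by
  unfold prob
  rw [Finset.sum_comm]
  refine Finset.sum_congr rfl fun ω _ => ?_
  simp only [Prod.mk.injEq, ite_and]
  by_cases hT : T ω = t
  · simp [hT, Finset.sum_ite_eq]
  · simp [hT]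

end helpers

lemma half_log (t : ℝ) (ht : 0 ≤ t) :
    t/2 * Real.logb 2 (t/2) = (t * Real.logb 2 t - t)/2 := by
  rcases eq_or_lt_of_le ht with h | h
  · simp [← h]
  · rw [Real.logb_div (ne_of_gt h) (by norm_num), Real.logb_self_eq_one (by norm_num)]
    ring

lemma key_identity (s p α : ℝ) (hs : 0 ≤ s) (hp : 0 ≤ p) (hα0 : 0 ≤ α) (hα1 : α ≤ 1) :
    -(p * Real.logb 2 p) - 2*(s/2 * Real.logb 2 (s/2)) + (s+p) * Real.logb 2 (s+p)
      + 2*((1-α) * (s/2) * Real.logb 2 ((1-α) * (s/2)))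
      + 2*(α * (s/2) * Real.logb 2 (α * (s/2)))
      + 2*(p/2 * Real.logb 2 (p/2)) - 2*((s+p)/2 * Real.logb 2 ((s+p)/2))
    = s * (1 - binEnt α) := by
  rw [show (1-α) * (s/2) = ((1-α)*s)/2 by ring, show α * (s/2) = (α*s)/2 by ring]
  have h2 : (1-α)*s * Real.logb 2 ((1-α)*s) + α*s * Real.logb 2 (α*s)
      = s * Real.logb 2 s - s * binEnt α := by
    rcases eq_or_lt_of_le hs with h | h
    · simp [← h]
    · rcases eq_or_lt_of_le hα0 with ha | ha
      · simp [← ha, binEnt]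
      · rcases eq_or_lt_of_le hα1 with hb | hb
        · simp [hb, binEnt]
        · rw [Real.logb_mul (by linarith) (ne_of_gt h), Real.logb_mul (ne_of_gt ha) (ne_of_gt h),
            binEnt]
          ring
  linear_combination (-2) * half_log s hs + 2 * half_log p hp
    - 2 * half_log (s+p) (by linarith) + 2 * half_log ((1-α)*s) (by nlinarith)
    + 2 * half_log (α*s) (by nlinarith) + h2

/-- `I(Y;V|Z) = q(1-p)(1 - h(α))` in the binary erasure example. -/
theorem binary_example_exponent {Ω : Type*} [Fintype Ω]
    (w : Ω → ℝ) (hw : IsPMF w) (p q α : ℝ)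
    (hp0 : 0 ≤ p) (hp1 : p ≤ 1) (hq0 : 0 ≤ q) (hq1 : q ≤ 1)
    (hα0 : 0 ≤ α) (hα1 : α ≤ 1)
    (X : Ω → Bool) (Y : Ω → Option Bool) (Z : Ω → Option Bool) (V : Ω → Bool)
    (hXunif : ∀ x, prob w X x = 1/2)
    (hYsame : ∀ x, prob w (fun ω => (X ω, Y ω)) (x, some x) = (1 - p) * prob w X x)
    (hYnone : ∀ x, prob w (fun ω => (X ω, Y ω)) (x, none) = p * prob w X x)
    (hYcross : ∀ x x', x ≠ x' → prob w (fun ω => (X ω, Y ω)) (x, some x') = 0)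
    (hZsame : ∀ y : Bool, prob w (fun ω => (Y ω, Z ω)) (some y, some y) =
      (1 - q) * prob w Y (some y))
    (hZnone : ∀ y : Bool, prob w (fun ω => (Y ω, Z ω)) (some y, none) =
      q * prob w Y (some y))
    (hZcross : ∀ y y' : Bool, y ≠ y' → prob w (fun ω => (Y ω, Z ω)) (some y, some y') = 0)
    (hZe : prob w (fun ω => (Y ω, Z ω)) (none, none) = prob w Y none)
    (hXZ : CondIndep w X Y Z)
    (hVsame : ∀ x, prob w (fun ω => (X ω, V ω)) (x, x) = (1 - α) * prob w X x)
    (hVflip : ∀ x, prob w (fun ω => (X ω, V ω)) (x, !x) = α * prob w X x)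
    (hMarkov : CondIndep w V X (fun ω => (Y ω, Z ω))) :
    cmi w Y V Z = q * (1 - p) * (1 - binEnt α) := by
  have hw0 := hw.1
  -- marginals of Y
  have PY1 : ∀ b, prob w Y (some b) = (1-p)/2 := by
    intro b
    rw [prob_fiber' w X Y (some b), Fintype.sum_bool]
    cases b
    · rw [hYcross true false (by decide), hYsame false, hXunif]; ring
    · rw [hYsame true, hYcross false true (by decide), hXunif]; ring
  have PY2 : prob w Y none = p := by
    rw [prob_fiber' w X Y none, Fintype.sum_bool, hYnone, hYnone, hXunif, hXunif]; ring
  -- joint (Y,Z)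
  have PYZss : ∀ b, prob w (fun ω => (Y ω, Z ω)) (some b, some b) = (1-p)*(1-q)/2 := by
    intro b; rw [hZsame, PY1]; ring
  have PYZsn : ∀ b, prob w (fun ω => (Y ω, Z ω)) (some b, none) = q*(1-p)/2 := by
    intro b; rw [hZnone, PY1]; ring
  have PYZnn : prob w (fun ω => (Y ω, Z ω)) (none, none) = p := by rw [hZe, PY2]
  have PYZns : ∀ c, prob w (fun ω => (Y ω, Z ω)) (none, some c) = 0 := by
    have hsum := prob_fiber w Y Z none
    rw [Fintype.sum_option, Fintype.sum_bool, PY2, PYZnn] at hsum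
    have n1 := prob_nonneg_s6 w hw0 (fun ω => (Y ω, Z ω)) (none, some true)
    have n2 := prob_nonneg_s6 w hw0 (fun ω => (Y ω, Z ω)) (none, some false)
    intro c; cases c <;> linarith
  -- marginal of Z
  have PZs : ∀ c, prob w Z (some c) = (1-p)*(1-q)/2 := by
    intro c
    rw [prob_fiber' w Y Z (some c), Fintype.sum_option, Fintype.sum_bool, PYZns]
    cases c
    · rw [hZcross true false (by decide), PYZss]; ring
    · rw [PYZss, hZcross false true (by decide)]; ring
  have PZn : prob w Z none = q*(1-p) + p := by
    rw [prob_fiber' w Y Z none, Fintype.sum_option, Fintype.sum_bool, PYZnn, PYZsn, PYZsn]; ring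
  -- joint (X,Y,Z) via hXZ
  have K1 : ∀ b z, prob w (fun ω => (X ω, Y ω, Z ω)) (b, some b, z)
      = prob w (fun ω => (Y ω, Z ω)) (some b, z) := by
    intro b z
    have h := hXZ b (some b) z
    rw [PY1, hYsame, hXunif] at h
    by_cases hp : (1:ℝ) - p = 0
    · have le1 : prob w (fun ω => (X ω, Y ω, Z ω)) (b, some b, z)
          ≤ prob w (fun ω => (X ω, Y ω)) (b, some b) := by
        refine prob_mono w hw0 _ _ _ _ fun ω hω => ?_
        simp only [Prod.mk.injEq] at hω ⊢; exact ⟨hω.1, hω.2.1⟩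
      have le2 : prob w (fun ω => (Y ω, Z ω)) (some b, z) ≤ prob w Y (some b) := by
        refine prob_mono w hw0 _ _ _ _ fun ω hω => ?_
        simp only [Prod.mk.injEq] at hω ⊢; exact hω.1
      rw [hYsame, hXunif] at le1
      rw [PY1] at le2
      have n1 := prob_nonneg_s6 w hw0 (fun ω => (X ω, Y ω, Z ω)) (b, some b, z)
      have n2 := prob_nonneg_s6 w hw0 (fun ω => (Y ω, Z ω)) (some b, z)
      rw [hp] at le1 le2
      linarith [le1, le2, n1, n2]
    · have h2 : ((1-p)/2) * prob w (fun ω => (X ω, Y ω, Z ω)) (b, some b, z)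
          = ((1-p)/2) * prob w (fun ω => (Y ω, Z ω)) (some b, z) := by linear_combination h
      exact mul_left_cancel₀ (div_ne_zero hp (by norm_num)) h2
  have K2 : ∀ x b z, x ≠ b → prob w (fun ω => (X ω, Y ω, Z ω)) (x, some b, z) = 0 := by
    intro x b z hxb
    have le1 : prob w (fun ω => (X ω, Y ω, Z ω)) (x, some b, z)
        ≤ prob w (fun ω => (X ω, Y ω)) (x, some b) := by
      refine prob_mono w hw0 _ _ _ _ fun ω hω => ?_
      simp only [Prod.mk.injEq] at hω ⊢; exact ⟨hω.1, hω.2.1⟩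
    rw [hYcross x b hxb] at le1
    have n1 := prob_nonneg_s6 w hw0 (fun ω => (X ω, Y ω, Z ω)) (x, some b, z)
    linarith
  have K3 : ∀ x c, prob w (fun ω => (X ω, Y ω, Z ω)) (x, none, some c) = 0 := by
    intro x c
    have le1 : prob w (fun ω => (X ω, Y ω, Z ω)) (x, none, some c)
        ≤ prob w (fun ω => (Y ω, Z ω)) (none, some c) := by
      refine prob_mono w hw0 _ _ _ _ fun ω hω => ?_
      simp only [Prod.mk.injEq] at hω ⊢; exact ⟨hω.2.1, hω.2.2⟩
    rw [PYZns] at le1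
    have n1 := prob_nonneg_s6 w hw0 (fun ω => (X ω, Y ω, Z ω)) (x, none, some c)
    linarith
  have K4 : ∀ x, prob w (fun ω => (X ω, Y ω, Z ω)) (x, none, none) = p/2 := by
    intro x
    have h := hXZ x none none
    rw [PY2, hYnone, hXunif, PYZnn] at h
    by_cases hp : p = 0
    · have le1 : prob w (fun ω => (X ω, Y ω, Z ω)) (x, none, none)
          ≤ prob w (fun ω => (X ω, Y ω)) (x, none) := by
        refine prob_mono w hw0 _ _ _ _ fun ω hω => ?_
        simp only [Prod.mk.injEq] at hω ⊢; exact ⟨hω.1, hω.2.1⟩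
      rw [hYnone, hXunif] at le1
      have n1 := prob_nonneg_s6 w hw0 (fun ω => (X ω, Y ω, Z ω)) (x, none, none)
      rw [hp] at le1 ⊢
      linarith
    · have h2 : p * prob w (fun ω => (X ω, Y ω, Z ω)) (x, none, none) = p * (p/2) := by
        linear_combination h
      exact mul_left_cancel₀ hp h2
  -- (V,X) joint
  have PVX : ∀ v x, prob w (fun ω => (V ω, X ω)) (v, x) = (if v = x then 1-α else α) * (1/2) := by
    intro v x
    rw [prob_congr_s6 w (fun ω => (V ω, X ω)) (fun ω => (X ω, V ω)) (v, x) (x, v)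
      (by intro ω; simp only [Prod.mk.injEq]; tauto)]
    cases v <;> cases x
    · simpa [hXunif] using hVsame false
    · simpa [hXunif] using hVflip true
    · simpa [hXunif] using hVflip false
    · simpa [hXunif] using hVsame true
  -- 4-variable joint via Markov
  have J : ∀ v x (y : Option Bool) (z : Option Bool),
      prob w (fun ω => (V ω, X ω, (Y ω, Z ω))) (v, x, (y, z))
      = (if v = x then 1-α else α) * prob w (fun ω => (X ω, Y ω, Z ω)) (x, y, z) := by
    intro v x y z
    have h := hMarkov v x (y, z)
    simp only [] at h
    rw [hXunif, PVX] at h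
    linear_combination 2 * h
  -- (Y,(V,Z)) joint
  have PYVZ : ∀ (y : Option Bool) v (z : Option Bool),
      prob w (fun ω => (Y ω, (V ω, Z ω))) (y, (v, z)) =
      (if v = true then 1-α else α) * prob w (fun ω => (X ω, Y ω, Z ω)) (true, y, z)
      + (if v = false then 1-α else α) * prob w (fun ω => (X ω, Y ω, Z ω)) (false, y, z) := by
    intro y v z
    have e : ∀ x : Bool, prob w (fun ω => ((Y ω, (V ω, Z ω)), X ω)) ((y, (v, z)), x)
        = (if v = x then 1-α else α) * prob w (fun ω => (X ω, Y ω, Z ω)) (x, y, z) := by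
      intro x
      rw [prob_congr_s6 w (fun ω => ((Y ω, (V ω, Z ω)), X ω)) (fun ω => (V ω, X ω, (Y ω, Z ω)))
        ((y, (v, z)), x) (v, x, (y, z)) (by intro ω; simp only [Prod.mk.injEq]; tauto), J]
    rw [prob_fiber w (fun ω => (Y ω, (V ω, Z ω))) X (y, (v, z)), Fintype.sum_bool, e true, e false]
  have T1 : ∀ b v, prob w (fun ω => (Y ω, (V ω, Z ω))) (some b, (v, some b))
      = (if v = b then 1-α else α) * ((1-p)*(1-q)/2) := by
    intro b v
    rw [PYVZ]
    cases b
    · rw [K2 true false (some false) (by decide), K1 false (some false), PYZss]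
      cases v <;> simp
    · rw [K1 true (some true), K2 false true (some true) (by decide), PYZss]
      cases v <;> simp
  have T2 : ∀ b v, prob w (fun ω => (Y ω, (V ω, Z ω))) (some b, (v, none))
      = (if v = b then 1-α else α) * (q*(1-p)/2) := by
    intro b v
    rw [PYVZ]
    cases b
    · rw [K2 true false none (by decide), K1 false none, PYZsn]
      cases v <;> simp
    · rw [K1 true none, K2 false true none (by decide), PYZsn]
      cases v <;> simp
  have T3a : ∀ v, prob w (fun ω => (Y ω, (V ω, Z ω))) (some false, (v, some true)) = 0 := by
    intro v
    rw [PYVZ, K2 true false (some true) (by decide), K1 false (some true),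
      hZcross false true (by decide)]
    ring
  have T3b : ∀ v, prob w (fun ω => (Y ω, (V ω, Z ω))) (some true, (v, some false)) = 0 := by
    intro v
    rw [PYVZ, K1 true (some false), K2 false true (some false) (by decide),
      hZcross true false (by decide)]
    ring
  have T4 : ∀ v, prob w (fun ω => (Y ω, (V ω, Z ω))) (none, (v, none)) = p/2 := by
    intro v
    rw [PYVZ, K4, K4]
    cases v <;> simp <;> ring
  have T5 : ∀ v c, prob w (fun ω => (Y ω, (V ω, Z ω))) (none, (v, some c)) = 0 := by
    intro v c
    rw [PYVZ, K3, K3]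
    ring
  -- (V,Z) marginal
  have U1 : ∀ v b, prob w (fun ω => (V ω, Z ω)) (v, some b)
      = (if v = b then 1-α else α) * ((1-p)*(1-q)/2) := by
    intro v b
    rw [prob_fiber' w Y (fun ω => (V ω, Z ω)) (v, some b)]
    simp only [Fintype.sum_option, Fintype.sum_bool]
    cases b
    · rw [T5, T3b, T1 false v]; ring
    · rw [T5, T1 true v, T3a]; ring
  have U2 : ∀ v, prob w (fun ω => (V ω, Z ω)) (v, none) = (q*(1-p)+p)/2 := by
    intro v
    rw [prob_fiber' w Y (fun ω => (V ω, Z ω)) (v, none)]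
    simp only [Fintype.sum_option, Fintype.sum_bool]
    rw [T4, T2 true v, T2 false v]
    cases v <;> simp <;> ring
  -- expand all entropies and finish
  simp only [cmi, condEnt, ent, Fintype.sum_prod_type, Fintype.sum_option, Fintype.sum_bool,
    PZs, PZn, PYZss false, PYZss true, PYZsn, PYZnn, PYZns,
    hZcross false true (by decide), hZcross true false (by decide),
    T1 false false, T1 false true, T1 true false, T1 true true,
    T2, T3a, T3b, T4, T5, U1, U2,
    Real.logb_zero, mul_zero, zero_mul, add_zero, zero_add,
    Bool.false_eq_true, Bool.true_eq_false, if_false, if_true, eq_self_iff_true, reduceIte]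
  linear_combination key_identity (q*(1-p)) p α (mul_nonneg hq0 (by linarith)) hp0 hα0 hα1
end

section
/- Let S be a discrete random variable taking values in a finite set, and for each value m of a random variable M let 𝒞(m) be a subset of the alphabet of S. Suppose Pr(S ∈ 𝒞(M)) ≥ 1 - δ. Define FAP = ∑_{m,z} p(m,z) · max_{s ∈ 𝒞(m)} p(s|m,z) (over a joint distribution of S, M, Z). Then -log FAP ≤ -log(1-δ) + H(S | M, Z, C=1), where C is the indicator of the event {S ∈ 𝒞(M)}. -/
open Finset Real

/- ------------------- auxiliary lemmas ------------------- -/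

lemma aux_prob_nonneg {Ω α : Type*} [Fintype Ω] [DecidableEq α]
    (w : Ω → ℝ) (hw : ∀ ω, 0 ≤ w ω) (X : Ω → α) (a : α) : 0 ≤ prob w X a :=
  Finset.sum_nonneg fun ω _ => by by_cases h : X ω = a <;> simp [h, hw ω]

lemma aux_sum_prob {Ω α : Type*} [Fintype Ω] [DecidableEq α] [Fintype α]
    (w : Ω → ℝ) (X : Ω → α) : ∑ a, prob w X a = ∑ ω, w ω := by
  unfold prob
  rw [Finset.sum_comm]
  refine Finset.sum_congr rfl fun ω _ => ?_
  simp

lemma aux_marginal {Ω α β : Type*} [Fintype Ω] [DecidableEq α] [Fintype α] [DecidableEq β]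
    (w : Ω → ℝ) (X : Ω → α) (Y : Ω → β) (y : β) :
    prob w Y y = ∑ s, prob w (fun ω => (X ω, Y ω)) (s, y) := by
  unfold prob
  rw [Finset.sum_comm]
  refine Finset.sum_congr rfl fun ω _ => ?_
  by_cases hy : Y ω = y
  · simp [hy, Prod.ext_iff]
  · simp [hy, Prod.ext_iff]

lemma aux_perY {α : Type*} [Fintype α] (P : α → ℝ) (T c : ℝ)
    (hP0 : ∀ s, 0 ≤ P s) (hPle : ∀ s, P s ≤ T) :
    ∑ s, P s * (c - Real.logb 2 T) ≤ ∑ s, P s * (c - Real.logb 2 (P s)) := by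
  refine Finset.sum_le_sum fun s _ => ?_
  rcases eq_or_lt_of_le (hP0 s) with h | h
  · rw [← h]; simp
  · have hlog : Real.logb 2 (P s) ≤ Real.logb 2 T :=
      Real.logb_le_logb_of_le (by norm_num) h (hPle s)
    exact mul_le_mul_of_nonneg_left (by linarith) h.le

lemma aux_condEnt_eq {Ω α β : Type*} [Fintype Ω] [Fintype α] [DecidableEq α]
    [Fintype β] [DecidableEq β] (w : Ω → ℝ) (X : Ω → α) (Y : Ω → β) :
    condEnt w X Y = ∑ y, ∑ s, prob w (fun ω => (X ω, Y ω)) (s, y) *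
      (Real.logb 2 (prob w Y y) - Real.logb 2 (prob w (fun ω => (X ω, Y ω)) (s, y))) := by
  have h : ∀ y : β, ∑ s, prob w (fun ω => (X ω, Y ω)) (s, y) *
      (Real.logb 2 (prob w Y y) - Real.logb 2 (prob w (fun ω => (X ω, Y ω)) (s, y)))
      = prob w Y y * Real.logb 2 (prob w Y y)
        - ∑ s, prob w (fun ω => (X ω, Y ω)) (s, y) *
            Real.logb 2 (prob w (fun ω => (X ω, Y ω)) (s, y)) := by
    intro y
    simp only [mul_sub]
    rw [Finset.sum_sub_distrib, ← Finset.sum_mul, ← aux_marginal w X Y y]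
  rw [Finset.sum_congr rfl fun y _ => h y, Finset.sum_sub_distrib]
  unfold condEnt ent
  rw [Fintype.sum_prod_type, Finset.sum_comm]
  ring

lemma aux_logsum {β : Type*} [Fintype β] (PY T : β → ℝ)
    (hPY0 : ∀ y, 0 ≤ PY y) (hPYsum : ∑ y, PY y = 1)
    (hT0 : ∀ y, 0 ≤ T y) (hTpos : ∀ y, 0 < PY y → 0 < T y) :
    ∑ y, PY y * (Real.logb 2 (T y) - Real.logb 2 (PY y)) ≤ Real.logb 2 (∑ y, T y) := by
  classical
  set t := Finset.univ.filter (fun y => 0 < PY y) with htdef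
  have hmem : ∀ y ∈ t, 0 < PY y := fun y hy => (Finset.mem_filter.mp hy).2
  have hzero : ∀ y ∈ (Finset.univ : Finset β), y ∉ t → PY y = 0 := by
    intro y _ hy
    by_contra h
    exact hy (Finset.mem_filter.mpr ⟨Finset.mem_univ y, (hPY0 y).lt_of_ne (Ne.symm h)⟩)
  have hsum1 : ∑ y ∈ t, PY y = 1 := by
    rw [← hPYsum]
    exact Finset.sum_subset (Finset.subset_univ t) hzero
  have htne : t.Nonempty := by
    by_contra h
    rw [Finset.not_nonempty_iff_eq_empty] at h
    rw [h, Finset.sum_empty] at hsum1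
    norm_num at hsum1
  have hTt : ∀ y ∈ t, 0 < T y := fun y hy => hTpos y (hmem y hy)
  have hTsum_pos : 0 < ∑ y ∈ t, T y := Finset.sum_pos hTt htne
  have hTsum_le : ∑ y ∈ t, T y ≤ ∑ y, T y :=
    Finset.sum_le_sum_of_subset_of_nonneg (Finset.subset_univ t) (fun y _ _ => hT0 y)
  have jensen : ∑ y ∈ t, PY y • Real.log (T y / PY y) ≤
      Real.log (∑ y ∈ t, PY y • (T y / PY y)) :=
    (strictConcaveOn_log_Ioi.concaveOn).le_map_sum (fun y hy => (hmem y hy).le) hsum1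
      (fun y hy => Set.mem_Ioi.mpr (div_pos (hTt y hy) (hmem y hy)))
  have heq2 : ∑ y ∈ t, PY y • (T y / PY y) = ∑ y ∈ t, T y := by
    refine Finset.sum_congr rfl fun y hy => ?_
    rw [smul_eq_mul, mul_comm, div_mul_cancel₀ _ (ne_of_gt (hmem y hy))]
  have jensen' : ∑ y ∈ t, PY y * Real.log (T y / PY y) ≤ Real.log (∑ y ∈ t, T y) := by
    have j := jensen
    simp only [smul_eq_mul] at j
    rw [show ∑ y ∈ t, PY y * (T y / PY y) = ∑ y ∈ t, T y from by
      simpa [smul_eq_mul] using heq2] at j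
    exact j
  have hlog2 : (0:ℝ) < Real.log 2 := Real.log_pos one_lt_two
  calc ∑ y, PY y * (Real.logb 2 (T y) - Real.logb 2 (PY y))
      = ∑ y ∈ t, PY y * (Real.logb 2 (T y) - Real.logb 2 (PY y)) :=
        (Finset.sum_subset (Finset.subset_univ t) (fun y h hy => by rw [hzero y h hy]; ring)).symm
    _ = ∑ y ∈ t, PY y * Real.log (T y / PY y) / Real.log 2 := by
        refine Finset.sum_congr rfl fun y hy => ?_
        rw [Real.log_div (ne_of_gt (hTt y hy)) (ne_of_gt (hmem y hy)), Real.logb, Real.logb]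
        ring
    _ = (∑ y ∈ t, PY y * Real.log (T y / PY y)) / Real.log 2 := by rw [Finset.sum_div]
    _ ≤ Real.log (∑ y ∈ t, T y) / Real.log 2 := (div_le_div_iff_of_pos_right hlog2).mpr jensen'
    _ ≤ Real.log (∑ y, T y) / Real.log 2 :=
        (div_le_div_iff_of_pos_right hlog2).mpr (Real.log_le_log hTsum_pos hTsum_le)
    _ = Real.logb 2 (∑ y, T y) := by rw [Real.logb]

lemma aux_key {Ω α β : Type*} [Fintype Ω] [Fintype α] [DecidableEq α]
    [Fintype β] [DecidableEq β]
    (w : Ω → ℝ) (hw0 : ∀ ω, 0 ≤ w ω) (hw1 : ∑ ω, w ω = 1)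
    (X : Ω → α) (Y : Ω → β) (T : β → ℝ)
    (hT0 : ∀ y, 0 ≤ T y)
    (hPle : ∀ s y, prob w (fun ω => (X ω, Y ω)) (s, y) ≤ T y) :
    -Real.logb 2 (∑ y, T y) ≤ condEnt w X Y := by
  have hPnn : ∀ (s : α) (y : β), 0 ≤ prob w (fun ω => (X ω, Y ω)) (s, y) :=
    fun s y => aux_prob_nonneg w hw0 _ _
  have hPYnn : ∀ y, 0 ≤ prob w Y y := fun y => aux_prob_nonneg w hw0 _ _
  have hPYsum : ∑ y, prob w Y y = 1 := by rw [aux_sum_prob, hw1]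
  have hTpos : ∀ y, 0 < prob w Y y → 0 < T y := by
    intro y hy
    rcases (hT0 y).lt_or_eq with h | h
    · exact h
    · exfalso
      have hz : ∀ s, prob w (fun ω => (X ω, Y ω)) (s, y) = 0 := fun s =>
        le_antisymm ((hPle s y).trans h.symm.le) (hPnn s y)
      exact absurd (by rw [aux_marginal w X Y y]; simp [hz]) (ne_of_gt hy)
  calc -Real.logb 2 (∑ y, T y)
      ≤ -∑ y, prob w Y y * (Real.logb 2 (T y) - Real.logb 2 (prob w Y y)) :=
        neg_le_neg (aux_logsum _ _ hPYnn hPYsum hT0 hTpos)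
    _ = ∑ y, prob w Y y * (Real.logb 2 (prob w Y y) - Real.logb 2 (T y)) := by
        rw [← Finset.sum_neg_distrib]
        exact Finset.sum_congr rfl fun y _ => by ring
    _ ≤ ∑ y, ∑ s, prob w (fun ω => (X ω, Y ω)) (s, y) *
          (Real.logb 2 (prob w Y y) - Real.logb 2 (prob w (fun ω => (X ω, Y ω)) (s, y))) := by
        refine Finset.sum_le_sum fun y _ => ?_
        have h1 : prob w Y y * (Real.logb 2 (prob w Y y) - Real.logb 2 (T y)) =
            ∑ s, prob w (fun ω => (X ω, Y ω)) (s, y) *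
              (Real.logb 2 (prob w Y y) - Real.logb 2 (T y)) := by
          rw [← Finset.sum_mul, ← aux_marginal]
        rw [h1]
        exact aux_perY _ _ _ (fun s => hPnn s y) (fun s => hPle s y)
    _ = condEnt w X Y := (aux_condEnt_eq w X Y).symm

/-- `-log FAP ≤ -log(1-δ) + H(S|M,Z,C=1)`. -/
theorem fap_converse_bound {Ω 𝒮 ℳ 𝒵 : Type*} [Fintype Ω]
    [Fintype 𝒮] [DecidableEq 𝒮] [Fintype ℳ] [DecidableEq ℳ]
    [Fintype 𝒵] [DecidableEq 𝒵]
    (w : Ω → ℝ) (hw : IsPMF w)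
    (S : Ω → 𝒮) (M : Ω → ℳ) (Z : Ω → 𝒵)
    (𝒞 : ℳ → Finset 𝒮) (δ : ℝ) (hδ : 0 < 1 - δ)
    (hcov : 1 - δ ≤ prob w (fun ω => decide (S ω ∈ 𝒞 (M ω))) true)
    (FAP : ℝ)
    (hFAP : FAP = ∑ m, ∑ z, ⨆ s ∈ 𝒞 m, prob w (fun ω => (S ω, M ω, Z ω)) (s, m, z))
    (hFAPpos : 0 < FAP) :
    -Real.logb 2 FAP ≤ -Real.logb 2 (1 - δ) +
      condEnt
        (fun ω => if S ω ∈ 𝒞 (M ω) then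
          w ω / prob w (fun ω' => decide (S ω' ∈ 𝒞 (M ω'))) true else 0)
        S (fun ω => (M ω, Z ω)) := by
  obtain ⟨hw0, hw1⟩ := hw
  have hq0 : 0 < prob w (fun ω => decide (S ω ∈ 𝒞 (M ω))) true := lt_of_lt_of_le hδ hcov
  set q : ℝ := prob w (fun ω => decide (S ω ∈ 𝒞 (M ω))) true with hqdef
  set w' : Ω → ℝ := fun ω => if S ω ∈ 𝒞 (M ω) then w ω / q else 0 with hw'def
  have hq_eq : q = ∑ ω, if S ω ∈ 𝒞 (M ω) then w ω else 0 := by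
    rw [hqdef]; unfold prob
    exact Finset.sum_congr rfl fun ω _ => by by_cases h : S ω ∈ 𝒞 (M ω) <;> simp [h]
  have hw'0 : ∀ ω, 0 ≤ w' ω := by
    intro ω; rw [hw'def]; dsimp only
    split
    · exact div_nonneg (hw0 ω) hq0.le
    · exact le_refl 0
  have hw'1 : ∑ ω, w' ω = 1 := by
    have : ∑ ω, w' ω = (∑ ω, if S ω ∈ 𝒞 (M ω) then w ω else 0) / q := by
      rw [Finset.sum_div]
      exact Finset.sum_congr rfl fun ω _ => by
        rw [hw'def]; dsimp only; split <;> simp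
    rw [this, ← hq_eq, div_self (ne_of_gt hq0)]
  set T : ℳ × 𝒵 → ℝ := fun y =>
    (⨆ s ∈ 𝒞 y.1, prob w (fun ω => (S ω, M ω, Z ω)) (s, y.1, y.2)) / q with hTdef
  have hT0 : ∀ y, 0 ≤ T y := by
    intro y; rw [hTdef]; dsimp only
    exact div_nonneg
      (Real.iSup_nonneg fun s => Real.iSup_nonneg fun _ => aux_prob_nonneg w hw0 _ _) hq0.le
  have hTsum : ∑ y, T y = FAP / q := by
    rw [hFAP, hTdef, ← Finset.sum_div]
    congr 1
    rw [Fintype.sum_prod_type]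
  have hPle : ∀ (s : 𝒮) (y : ℳ × 𝒵),
      prob w' (fun ω => (S ω, (M ω, Z ω))) (s, y) ≤ T y := by
    rintro s ⟨m, z⟩
    by_cases hs : s ∈ 𝒞 m
    · have heq : prob w' (fun ω => (S ω, (M ω, Z ω))) (s, (m, z)) =
          prob w (fun ω => (S ω, M ω, Z ω)) (s, m, z) / q := by
        unfold prob
        rw [Finset.sum_div]
        refine Finset.sum_congr rfl fun ω _ => ?_
        by_cases h : (S ω, M ω, Z ω) = (s, m, z)
        · simp only [Prod.mk.injEq] at h
          obtain ⟨h1, h2, h3⟩ := h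
          have hm : S ω ∈ 𝒞 (M ω) := by rw [h1, h2]; exact hs
          simp [hw'def, h1, h2, h3, hm, hs]
        · have h' : ¬ (S ω, (M ω, Z ω)) = (s, (m, z)) := h
          rw [if_neg h', if_neg h, zero_div]
      rw [heq, hTdef]
      dsimp only
      apply (div_le_div_iff_of_pos_right hq0).mpr
      have hbdd : BddAbove (Set.range fun s' : 𝒮 =>
          ⨆ _ : s' ∈ 𝒞 m, prob w (fun ω => (S ω, M ω, Z ω)) (s', m, z)) :=
        Set.Finite.bddAbove (Set.finite_range _)
      have h2 : prob w (fun ω => (S ω, M ω, Z ω)) (s, m, z) =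
          ⨆ _ : s ∈ 𝒞 m, prob w (fun ω => (S ω, M ω, Z ω)) (s, m, z) := (ciSup_pos (f := fun _ => prob w (fun ω => (S ω, M ω, Z ω)) (s, m, z)) hs).symm
      rw [h2]
      exact le_ciSup hbdd s
    · have hz : prob w' (fun ω => (S ω, (M ω, Z ω))) (s, (m, z)) = 0 := by
        unfold prob
        refine Finset.sum_eq_zero fun ω _ => ?_
        by_cases h : (S ω, (M ω, Z ω)) = (s, (m, z))
        · simp only [Prod.mk.injEq] at h
          obtain ⟨h1, h2, h3⟩ := h
          simp [hw'def, h1, h2, h3, hs]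
        · rw [if_neg h]
      rw [hz]
      exact hT0 (m, z)
  have hkey : -Real.logb 2 (∑ y, T y) ≤ condEnt w' S (fun ω => (M ω, Z ω)) :=
    aux_key w' hw'0 hw'1 S (fun ω => (M ω, Z ω)) T hT0 hPle
  rw [hTsum] at hkey
  have hFq : 0 < FAP / q := div_pos hFAPpos hq0
  have hsplit : Real.logb 2 FAP = Real.logb 2 (FAP / q) + Real.logb 2 q := by
    rw [← Real.logb_mul (ne_of_gt hFq) (ne_of_gt hq0), div_mul_cancel₀ _ (ne_of_gt hq0)]
  have hmono : Real.logb 2 (1 - δ) ≤ Real.logb 2 q :=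
    Real.logb_le_logb_of_le one_lt_two hδ hcov
  linarith
end
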